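/- Let n ≥ 2 and let A be an n×n real matrix with nonnegative entries and a_{11} = 0. Then for every positive integer m, (tr A)^m ≤ (n − 1)^{m−1} · tr(A^m). -/

import Mathlib

open Matrix Polynomial

/-- The eigenvalues of a real square matrix: the multiset of roots (with multiplicity)
of its characteristic polynomial over `ℂ`. -/
noncomputable def eigs {n : ℕ} (A : Matrix (Fin n) (Fin n) ℝ) : Multiset ℂ :=
  ((A.map Complex.ofReal).charpoly).roots

/-- The spectral radius: the maximum of `|λ|` over the eigenvalues `λ`. -/
noncomputable def specRad {n : ℕ} (A : Matrix (Fin n) (Fin n) ℝ) : ℝ :=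
  sSup {r : ℝ | ∃ μ ∈ eigs A, r = ‖μ‖}

/-- The spread: the maximum of `|λ - μ|` over pairs of eigenvalues `λ, μ`. -/
noncomputable def spread {n : ℕ} (A : Matrix (Fin n) (Fin n) ℝ) : ℝ :=
  sSup {r : ℝ | ∃ μ ∈ eigs A, ∃ ν ∈ eigs A, r = ‖μ - ν‖}

/-!
Only the diagonal entries `A i i` with `i ∈ s` contribute to `tr A`, so the power-mean
inequality gives `(tr A)^m ≤ #s^(m-1) ∑_{i ∈ s} (A i i)^m`. For a nonnegative matrix,
`(A i i)^m ≤ (A^m) i i` (the closed walk staying at `i` is one of the walks counted by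
`(A^m) i i`), hence `∑_{i ∈ s} (A i i)^m ≤ tr (A^m)`. With `a₁₁ = 0` take `s = {2, …, n}`.
-/

namespace Matrix

variable {ι α : Type*} [Fintype ι] [DecidableEq ι]

section OrderedSemiring

variable [Semiring α] [PartialOrder α] [IsOrderedRing α]
  {A : Matrix ι ι α}

lemma pow_apply_self_le_pow_apply_self (hA : ∀ i j, 0 ≤ A i j) (k : ℕ) (i : ι) :
    A i i ^ k ≤ (A ^ k) i i := by
  induction k with
  | zero => simp
  | succ k ih =>
    rw [pow_succ, pow_succ, mul_apply]
    calc A i i ^ k * A i i ≤ (A ^ k) i i * A i i := mul_le_mul_of_nonneg_right ih (hA i i)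
      _ ≤ ∑ l, (A ^ k) i l * A l i :=
        Finset.single_le_sum (fun l _ => mul_nonneg (pow_apply_nonneg hA k i l) (hA l i))
          (Finset.mem_univ i)

lemma sum_pow_diag_le_trace_pow (hA : ∀ i j, 0 ≤ A i j) (s : Finset ι) (k : ℕ) :
    ∑ i ∈ s, A i i ^ k ≤ (A ^ k).trace :=
  calc ∑ i ∈ s, A i i ^ k ≤ ∑ i ∈ s, (A ^ k) i i :=
        Finset.sum_le_sum fun i _ => pow_apply_self_le_pow_apply_self hA k i
    _ ≤ ∑ i, (A ^ k) i i :=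
        Finset.sum_le_sum_of_subset_of_nonneg (Finset.subset_univ s)
          fun i _ _ => pow_apply_nonneg hA k i i

end OrderedSemiring

lemma trace_pow_le_card_pow_mul_trace_pow [Semiring α] [LinearOrder α] [IsStrictOrderedRing α]
    [ExistsAddOfLE α] {A : Matrix ι ι α} (hA : ∀ i j, 0 ≤ A i j) {s : Finset ι}
    (hs : ∀ i ∉ s, A i i = 0) (k : ℕ) :
    A.trace ^ (k + 1) ≤ (s.card : α) ^ k * (A ^ (k + 1)).trace := by
  have htrace : A.trace = ∑ i ∈ s, A i i :=
    (Finset.sum_subset (Finset.subset_univ s) fun i _ hi => hs i hi).symm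
  calc A.trace ^ (k + 1) ≤ (s.card : α) ^ k * ∑ i ∈ s, A i i ^ (k + 1) := by
        rw [htrace]; exact pow_sum_le_card_mul_sum_pow (fun i _ => hA i i) k
    _ ≤ (s.card : α) ^ k * (A ^ (k + 1)).trace := by
        gcongr; exact sum_pow_diag_le_trace_pow hA s (k + 1)

end Matrix

theorem jll_ineq_a11_zero (n : ℕ) (hn : 2 ≤ n) (A : Matrix (Fin n) (Fin n) ℝ)
    (hA : ∀ i j, 0 ≤ A i j)
    (h11 : A ⟨0, by omega⟩ ⟨0, by omega⟩ = 0)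
    (m : ℕ) (hm : 1 ≤ m) :
    (A.trace) ^ m ≤ ((n - 1 : ℕ) : ℝ) ^ (m - 1) * (A ^ m).trace := by
  obtain ⟨k, rfl⟩ : ∃ k, m = k + 1 := ⟨m - 1, by omega⟩
  have hs : ∀ i ∉ Finset.univ.erase (⟨0, by omega⟩ : Fin n), A i i = 0 := by
    intro i hi
    obtain rfl : i = ⟨0, by omega⟩ := by simpa using hi
    exact h11
  have hcard : (Finset.univ.erase (⟨0, by omega⟩ : Fin n)).card = n - 1 := by simp
  simpa [hcard] using trace_pow_le_card_pow_mul_trace_pow hA hs k
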